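/- Let (S₁,·) and (S₂,·) be countable commutative semigroups and let A ⊆ S₁ and B ⊆ S₂ be C-sets. Then A × B is a C-set in the product semigroup S₁ × S₂ (with coordinatewise multiplication). -/

import Mathlib

/-- The product `∏_{t ∈ H} f t` over a nonempty finite set `H ⊆ ℕ` in a semigroup,
computed in increasing order of the indices (in a commutative semigroup the order
is immaterial). -/
def semigroupProd {S : Type*} [Semigroup S] (f : ℕ → S) (H : Finset ℕ) (hH : H.Nonempty) : S :=
  ((H.sort (· ≤ ·)).tail).foldl (fun x t => x * f t) (f (H.min' hH))

/-- A set `A` in a commutative semigroup `S` is a J-set if for every finite nonempty set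
`F` of sequences in `S` there are `a ∈ S` and a finite nonempty `H ⊆ ℕ` such that
`a * ∏_{t ∈ H} f t ∈ A` for every `f ∈ F`. -/
def IsJSet {S : Type*} [CommSemigroup S] (A : Set S) : Prop :=
  ∀ F : Finset (ℕ → S), F.Nonempty →
    ∃ a : S, ∃ H : Finset ℕ, ∃ hH : H.Nonempty,
      ∀ f ∈ F, a * semigroupProd f H hH ∈ A

/-- A set `A` in a countable (commutative) semigroup `S` is a C-set if there is a
decreasing sequence `⟨C_n⟩` of subsets of `A` such that (1) for each `n` and each
`x ∈ C_n` there is `m` with `C_m ⊆ x⁻¹C_n`, and (2) each `C_n` is a J-set. -/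
def IsCSet {S : Type*} [CommSemigroup S] (A : Set S) : Prop :=
  ∃ C : ℕ → Set S, (∀ n, C n ⊆ A) ∧ (∀ n, C (n + 1) ⊆ C n) ∧
    (∀ n, ∀ x ∈ C n, ∃ m, C m ⊆ {s : S | x * s ∈ C n}) ∧
    (∀ n, IsJSet (C n))

/-! Only the J-set property of `C n ×ˢ D n` needs an argument. From the sequence `C` one builds,
recursively, elements `a j` and pairwise disjoint blocks `H j` such that for a given finite family
`F`, every finite nonempty `K` and every `f ∈ F`, `∏_{j ∈ K} (a j * ∏_{t ∈ H j} f t) ∈ C n`: each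
new block is taken from the J-set `C m` for a level `m` so deep that `C m ⊆ x⁻¹ C m'` for all
earlier terms `x ∈ C m'`. The J-set property of `D n`, applied to the block products
`j ↦ ∏_{t ∈ H j} (f t).2`, then picks one `K`, and `K.biUnion H` works in both coordinates. -/

section SemigroupProd

variable {S T : Type*} [CommSemigroup S] [CommSemigroup T]

lemma coe_foldl_mul (f : ℕ → S) (l : List ℕ) (x : S) :
    ((l.foldl (fun x t => x * f t) x : S) : WithOne S)
      = x * (l.map fun t => (f t : WithOne S)).prod := by
  induction l generalizing x with
  | nil => simp
  | cons a l ih => simp [ih, mul_assoc]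

lemma coe_semigroupProd (f : ℕ → S) (H : Finset ℕ) (hH : H.Nonempty) :
    ((semigroupProd f H hH : S) : WithOne S) = ∏ t ∈ H, (f t : WithOne S) := by
  have hmin := H.min'_mem hH
  have hsort : H.sort (· ≤ ·) = H.min' hH :: (H.erase (H.min' hH)).sort (· ≤ ·) := by
    conv_lhs => rw [← Finset.insert_erase hmin]
    exact Finset.sort_insert _ (fun b hb => H.min'_le b (Finset.mem_of_mem_erase hb))
      (Finset.notMem_erase _ _)
  rw [semigroupProd, hsort, List.tail_cons, coe_foldl_mul, ← Finset.mul_prod_erase H _ hmin,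
    ← List.prod_toFinset _ (Finset.sort_nodup _ _), Finset.sort_toFinset]

lemma map_semigroupProd (φ : S →ₙ* T) (f : ℕ → S) (H : Finset ℕ) (hH : H.Nonempty) :
    φ (semigroupProd f H hH) = semigroupProd (fun t => φ (f t)) H hH := by
  apply WithOne.coe_injective
  rw [← WithOne.mapMulHom_coe, coe_semigroupProd, coe_semigroupProd, map_prod]
  simp only [WithOne.mapMulHom_coe]

lemma fst_semigroupProd (f : ℕ → S × T) (H : Finset ℕ) (hH : H.Nonempty) :
    (semigroupProd f H hH).1 = semigroupProd (fun t => (f t).1) H hH :=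
  map_semigroupProd (MulHom.fst S T) f H hH

lemma snd_semigroupProd (f : ℕ → S × T) (H : Finset ℕ) (hH : H.Nonempty) :
    (semigroupProd f H hH).2 = semigroupProd (fun t => (f t).2) H hH :=
  map_semigroupProd (MulHom.snd S T) f H hH

lemma semigroupProd_singleton (f : ℕ → S) (j : ℕ) (h : ({j} : Finset ℕ).Nonempty) :
    semigroupProd f {j} h = f j := by
  rw [← WithOne.coe_inj, coe_semigroupProd, Finset.prod_singleton]

lemma semigroupProd_insert (f : ℕ → S) {j : ℕ} {H : Finset ℕ} (hj : j ∉ H)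
    (hH : H.Nonempty) (h : (insert j H).Nonempty) :
    semigroupProd f (insert j H) h = f j * semigroupProd f H hH := by
  rw [← WithOne.coe_inj, WithOne.coe_mul, coe_semigroupProd, coe_semigroupProd,
    Finset.prod_insert hj]

lemma semigroupProd_mul (f g : ℕ → S) (H : Finset ℕ) (hH : H.Nonempty) :
    semigroupProd (fun t => f t * g t) H hH = semigroupProd f H hH * semigroupProd g H hH := by
  rw [← WithOne.coe_inj, WithOne.coe_mul, coe_semigroupProd, coe_semigroupProd,
    coe_semigroupProd, ← Finset.prod_mul_distrib]
  simp only [WithOne.coe_mul]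

lemma semigroupProd_map (f : ℕ → S) (e : ℕ ↪ ℕ) (H : Finset ℕ) (hH : H.Nonempty)
    (h : (H.map e).Nonempty) :
    semigroupProd f (H.map e) h = semigroupProd (fun t => f (e t)) H hH := by
  rw [← WithOne.coe_inj, coe_semigroupProd, coe_semigroupProd, Finset.prod_map]

lemma semigroupProd_biUnion (f : ℕ → S) (K : Finset ℕ) (hK : K.Nonempty)
    (H : ℕ → Finset ℕ) (hH : ∀ j, (H j).Nonempty) (hdisj : (K : Set ℕ).PairwiseDisjoint H)
    (h : (K.biUnion H).Nonempty) :
    semigroupProd f (K.biUnion H) h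
      = semigroupProd (fun j => semigroupProd f (H j) (hH j)) K hK := by
  rw [← WithOne.coe_inj, coe_semigroupProd, coe_semigroupProd, Finset.prod_biUnion hdisj]
  exact Finset.prod_congr rfl fun j _ => (coe_semigroupProd f (H j) (hH j)).symm

end SemigroupProd

section CSet

variable {S T : Type*} [CommSemigroup S] [CommSemigroup T]

lemma IsJSet.exists_gt {A : Set S} (hA : IsJSet A) (F : Finset (ℕ → S)) (hF : F.Nonempty)
    (d : ℕ) :
    ∃ a : S, ∃ H : Finset ℕ, ∃ hH : H.Nonempty,
      (∀ t ∈ H, d < t) ∧ ∀ f ∈ F, a * semigroupProd f H hH ∈ A := by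
  classical
  let e := addRightEmbedding (d + 1)
  obtain ⟨a, H, hH, hmem⟩ := hA (F.image fun f t => f (e t)) (hF.image _)
  refine ⟨a, H.map e, hH.map, fun t ht => ?_, fun f hf => ?_⟩
  · obtain ⟨s, -, rfl⟩ := Finset.mem_map.1 ht
    change d < s + (d + 1)
    omega
  · rw [semigroupProd_map f e H hH]
    exact hmem _ (Finset.mem_image_of_mem _ hf)

structure LevelledBlock (S : Type*) where
  a : S
  H : Finset ℕ
  nonempty : H.Nonempty
  level : ℕ

namespace LevelledBlock

def value (p : LevelledBlock S) (f : ℕ → S) : S :=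
  p.a * semigroupProd f p.H p.nonempty

def IsGood (C : ℕ → Set S) (F : Finset (ℕ → S)) (n : ℕ) (p : LevelledBlock S) : Prop :=
  n ≤ p.level ∧ ∀ f ∈ F, p.value f ∈ C p.level

def Precedes (C : ℕ → Set S) (F : Finset (ℕ → S)) (p q : LevelledBlock S) : Prop :=
  (∀ t ∈ p.H, ∀ t' ∈ q.H, t < t') ∧ ∀ f ∈ F, ∀ z ∈ C q.level, p.value f * z ∈ C p.level

lemma exists_isGood_precedes {C : ℕ → Set S} (hanti : Antitone C)
    (hshift : ∀ n, ∀ x ∈ C n, ∃ m, C m ⊆ {s : S | x * s ∈ C n})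
    (hJ : ∀ n, IsJSet (C n)) {F : Finset (ℕ → S)} (hF : F.Nonempty) (n : ℕ)
    (s : Finset (LevelledBlock S)) (hs : ∀ p ∈ s, p.IsGood C F n) :
    ∃ q : LevelledBlock S, q.IsGood C F n ∧ ∀ p ∈ s, p.Precedes C F q := by
  have : ∀ p ∈ s, ∀ f ∈ F, ∃ m, C m ⊆ {z : S | p.value f * z ∈ C p.level} :=
    fun p hp f hf => hshift _ _ ((hs p hp).2 f hf)
  choose! level hlevel using this
  let m := n ⊔ s.sup fun p => F.sup (level p)
  let d := s.sup fun p => p.H.max' p.nonempty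
  obtain ⟨a, H, hH, hgt, hmem⟩ := (hJ m).exists_gt F hF d
  refine ⟨⟨a, H, hH, m⟩, ⟨le_sup_left, hmem⟩, fun p hp => ⟨fun t ht t' ht' => ?_, ?_⟩⟩
  · calc t ≤ p.H.max' p.nonempty := p.H.le_max' t ht
      _ ≤ d := Finset.le_sup (f := fun p => p.H.max' p.nonempty) hp
      _ < t' := hgt t' ht'
  · intro f hf z hz
    refine hlevel p hp f hf (hanti ?_ hz)
    calc level p f ≤ F.sup (level p) := Finset.le_sup hf
      _ ≤ s.sup fun p => F.sup (level p) := Finset.le_sup (f := fun p => F.sup (level p)) hp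
      _ ≤ m := le_sup_right

lemma exists_mem_semigroupProd_value_mem {C : ℕ → Set S} {F : Finset (ℕ → S)}
    {p : ℕ → LevelledBlock S}
    (hp : ∀ i j, i < j → (p i).Precedes C F (p j)) {f : ℕ → S} (hf : f ∈ F)
    (hgood : ∀ j, (p j).value f ∈ C (p j).level) (K : Finset ℕ) (hK : K.Nonempty) :
    ∃ j ∈ K, semigroupProd (fun j => (p j).value f) K hK ∈ C (p j).level := by
  induction K using Finset.induction_on_min with
  | empty => exact absurd hK Finset.not_nonempty_empty
  | insert i K hlt ih =>
    rcases K.eq_empty_or_nonempty with rfl | hK'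
    · refine ⟨i, Finset.mem_insert_self i ∅, ?_⟩
      simpa only [Finset.insert_empty, semigroupProd_singleton] using hgood i
    obtain ⟨j, hj, hmem⟩ := ih hK'
    refine ⟨i, Finset.mem_insert_self i K, ?_⟩
    rw [semigroupProd_insert _ (fun hi => lt_irrefl i (hlt i hi)) hK']
    exact (hp i j (hlt j hj)).2 f hf _ hmem

end LevelledBlock

open LevelledBlock Function in
lemma exists_blocks_semigroupProd_mem {C : ℕ → Set S} (hanti : Antitone C)
    (hshift : ∀ n, ∀ x ∈ C n, ∃ m, C m ⊆ {s : S | x * s ∈ C n})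
    (hJ : ∀ n, IsJSet (C n)) (n : ℕ) {F : Finset (ℕ → S)} (hF : F.Nonempty) :
    ∃ (a : ℕ → S) (H : ℕ → Finset ℕ) (hH : ∀ j, (H j).Nonempty), Pairwise (Disjoint on H) ∧
      ∀ (K : Finset ℕ) (hK : K.Nonempty), ∀ f ∈ F,
        semigroupProd (fun j => a j * semigroupProd f (H j) (hH j)) K hK ∈ C n := by
  obtain ⟨p, hgood, hprec⟩ := exists_seq_of_forall_finset_exists (IsGood C F n) (Precedes C F)
    (exists_isGood_precedes hanti hshift hJ hF n)
  refine ⟨fun j => (p j).a, fun j => (p j).H, fun j => (p j).nonempty, fun i j hij => ?_,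
    fun K hK f hf => ?_⟩
  · rcases hij.lt_or_gt with hij | hij
    · exact Finset.disjoint_left.2 fun t ht ht' => lt_irrefl t ((hprec i j hij).1 t ht t ht')
    · exact Finset.disjoint_right.2 fun t ht ht' => lt_irrefl t ((hprec j i hij).1 t ht t ht')
  obtain ⟨j, -, hmem⟩ :=
    exists_mem_semigroupProd_value_mem hprec hf (fun j => (hgood j).2 f hf) K hK
  exact hanti (hgood j).1 hmem

lemma isJSet_prod {C : ℕ → Set S} (hanti : Antitone C)
    (hshift : ∀ n, ∀ x ∈ C n, ∃ m, C m ⊆ {s : S | x * s ∈ C n})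
    (hJ : ∀ n, IsJSet (C n)) (n : ℕ) {D : Set T} (hD : IsJSet D) : IsJSet (C n ×ˢ D) := by
  classical
  intro F hF
  obtain ⟨a, H, hH, hdisj, ha⟩ :=
    exists_blocks_semigroupProd_mem hanti hshift hJ n (hF.image fun f t => (f t).1)
  obtain ⟨b, K, hK, hb⟩ :=
    hD (F.image fun f j => semigroupProd (fun t => (f t).2) (H j) (hH j)) (hF.image _)
  have hKH : (K.biUnion H).Nonempty := hK.biUnion fun j _ => hH j
  refine ⟨(semigroupProd a K hK, b), K.biUnion H, hKH, fun f hf => ⟨?_, ?_⟩⟩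
  · rw [Prod.fst_mul, fst_semigroupProd,
      semigroupProd_biUnion _ K hK H hH (hdisj.set_pairwise _), ← semigroupProd_mul]
    exact ha K hK _ (Finset.mem_image_of_mem _ hf)
  · rw [Prod.snd_mul, snd_semigroupProd,
      semigroupProd_biUnion _ K hK H hH (hdisj.set_pairwise _)]
    exact hb _ (Finset.mem_image_of_mem _ hf)

end CSet

theorem cset_prod_general {S₁ S₂ : Type*} [CommSemigroup S₁] [CommSemigroup S₂]
    {A : Set S₁} {B : Set S₂} (hA : IsCSet A) (hB : IsCSet B) :
    IsCSet (A ×ˢ B) := by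
  obtain ⟨C, hCA, hCdec, hCshift, hCJ⟩ := hA
  obtain ⟨D, hDB, hDdec, hDshift, hDJ⟩ := hB
  have hCanti := antitone_nat_of_succ_le hCdec
  have hDanti := antitone_nat_of_succ_le hDdec
  refine ⟨fun n => C n ×ˢ D n, fun n => Set.prod_mono (hCA n) (hDB n),
    fun n => Set.prod_mono (hCdec n) (hDdec n), ?_,
    fun n => isJSet_prod hCanti hCshift hCJ n (hDJ n)⟩
  rintro n ⟨x₁, x₂⟩ ⟨hx₁, hx₂⟩
  obtain ⟨m₁, hm₁⟩ := hCshift n x₁ hx₁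
  obtain ⟨m₂, hm₂⟩ := hDshift n x₂ hx₂
  exact ⟨max m₁ m₂, fun s ⟨hs₁, hs₂⟩ =>
    ⟨hm₁ (hCanti (le_max_left m₁ m₂) hs₁), hm₂ (hDanti (le_max_right m₁ m₂) hs₂)⟩⟩

theorem cset_prod {S₁ S₂ : Type*} [CommSemigroup S₁] [CommSemigroup S₂]
    [Countable S₁] [Countable S₂]
    {A : Set S₁} {B : Set S₂} (hA : IsCSet A) (hB : IsCSet B) :
    IsCSet (A ×ˢ B) :=
  cset_prod_general hA hB
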